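/- Let g ⊂ ℝ^d be a line and let ℐ be a family of (possibly degenerate) compact closed segments I ⊆ ℝ^d such that each I ∈ ℐ is contained in some line g_I parallel to g. Suppose that for every subfamily 𝒦 ⊆ ℐ with at most d + 1 elements there exists an affine hyperplane H_𝒦 ⊆ ℝ^d not parallel to g intersecting every segment I ∈ 𝒦. Then there exists an affine hyperplane H ⊆ ℝ^d not parallel to g that intersects every segment I ∈ ℐ (necessarily in a single point). -/

import Mathlib

open Set

noncomputable section

/-- Euclidean space `ℝ^n`. -/
abbrev E (n : ℕ) := EuclideanSpace ℝ (Fin n)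

/-- A convex body of `ℝ^n`: a compact convex subset (possibly empty). -/
def IsBody {n : ℕ} (C : Set (E n)) : Prop := Convex ℝ C ∧ IsCompact C

/-- `Φ` represents a lattice homomorphism from `𝒞(ℝ^c)` to `𝒞(ℝ^d)`: it maps convex bodies
to convex bodies, and on convex bodies it preserves intersections (the lattice meet) and
convex hulls of unions (the lattice join). -/
def IsLatHom {c d : ℕ} (Φ : Set (E c) → Set (E d)) : Prop :=
  (∀ C, IsBody C → IsBody (Φ C)) ∧
  ∀ C D : Set (E c), IsBody C → IsBody D →
    Φ (C ∩ D) = Φ C ∩ Φ D ∧ Φ (convexHull ℝ (C ∪ D)) = convexHull ℝ (Φ C ∪ Φ D)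

/-- `Φ` is non-trivial: it is not constant on convex bodies. -/
def NonTrivial {c d : ℕ} (Φ : Set (E c) → Set (E d)) : Prop :=
  ∃ C D : Set (E c), IsBody C ∧ IsBody D ∧ Φ C ≠ Φ D

/-- The closed ray emanating from `o` in direction `u`. -/
def Ray {n : ℕ} (o u : E n) : Set (E n) := {p | ∃ t : ℝ, 0 ≤ t ∧ p = o + t • u}

/-- An affine hyperplane of `ℝ^n`: a nonempty affine subspace of dimension `n - 1`. -/
def IsHyperplane {n : ℕ} (H : AffineSubspace ℝ (E n)) : Prop :=
  (H : Set (E n)).Nonempty ∧ Module.finrank ℝ H.direction + 1 = n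

open scoped Classical in
/-- The dimension of a convex set: the dimension of its affine hull, with `sdim ∅ = -1`. -/
def sdim {n : ℕ} (s : Set (E n)) : ℤ :=
  if s = ∅ then -1 else Module.finrank ℝ (affineSpan ℝ s).direction

/-!
Fix `u` spanning the direction of `g`. A hyperplane not parallel to `g` is a level set
`{φ = r}` of a functional with `φ u = 1`; writing `φ = φ₀ + χ` with `χ u = 0`, it meets a segment
`[a, b] ⊆ a + ℝ u` iff `r - χ a` lies in the interval `[φ₀ a, φ₀ b]`. So transversals are the common
points of slabs `ℓ⁻¹(J)` in the `d`-dimensional space `{χ | χ u = 0} × ℝ`, and Helly's theorem there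
gives a transversal to every finite subfamily. Slabs are not compact, but all the functionals `ℓ`
are combinations of finitely many of them, so compactness of the corresponding finite product of
intervals yields a common point of the whole family.
-/

open Module Finset

theorem iInter_preimage_nonempty_of_forall_finset {ι M : Type*} [AddCommGroup M] [Module ℝ M]
    [FiniteDimensional ℝ M] (f : ι → Dual ℝ M) {J : ι → Set ℝ} (hJ : ∀ i, IsCompact (J i))
    (h : ∀ s : Finset ι, (⋂ i ∈ s, f i ⁻¹' J i).Nonempty) : (⋂ i, f i ⁻¹' J i).Nonempty := by
  classical
  obtain ⟨κ, a, -, hspan, hli⟩ := exists_linearIndependent' ℝ f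
  have : Finite κ := hli.finite
  have : Fintype κ := Fintype.ofFinite κ
  let Ψ : M →ₗ[ℝ] κ → ℝ := LinearMap.pi fun k ↦ f (a k)
  have hcomb : ∀ i, ∃ c : κ → ℝ, ∀ x, f i x = ∑ k, c k * Ψ x k := by
    intro i
    have hi : f i ∈ Submodule.span ℝ (Set.range (f ∘ a)) := hspan ▸ Submodule.subset_span ⟨i, rfl⟩
    obtain ⟨c, hc⟩ := Submodule.mem_span_range_iff_exists_fun ℝ |>.1 hi
    exact ⟨c, fun x ↦ by simp [← hc, Ψ]⟩
  choose c hc using hcomb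
  have hK : IsCompact ((univ : Set κ).pi (fun k ↦ J (a k)) ∩ LinearMap.range Ψ) :=
    (isCompact_univ_pi fun k ↦ hJ (a k)).inter_right (LinearMap.range Ψ).closed_of_finiteDimensional
  obtain ⟨-, ⟨-, x, rfl⟩, hx⟩ := hK.inter_iInter_nonempty (fun i ↦ {v | ∑ k, c i k * v k ∈ J i})
    (fun i ↦ (hJ i).isClosed.preimage (by fun_prop)) fun s ↦ by
      obtain ⟨x, hx⟩ := h (s ∪ univ.image a)
      simp only [mem_iInter] at hx
      refine ⟨Ψ x, ⟨fun k _ ↦ hx (a k) (by simp), x, rfl⟩, mem_iInter₂.2 fun i hi ↦ ?_⟩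
      simpa [← hc] using hx i (by simp [hi])
  exact ⟨x, mem_iInter.2 fun i ↦ by simpa [← hc] using mem_iInter.1 hx i⟩

theorem helly_theorem_slab {ι M : Type*} [AddCommGroup M] [Module ℝ M] [FiniteDimensional ℝ M]
    (f : ι → Dual ℝ M) {J : ι → Set ℝ} (hJconv : ∀ i, Convex ℝ (J i)) (hJ : ∀ i, IsCompact (J i))
    (h : ∀ s : Finset ι, #s ≤ finrank ℝ M + 1 → (⋂ i ∈ s, f i ⁻¹' J i).Nonempty) :
    (⋂ i, f i ⁻¹' J i).Nonempty :=
  iInter_preimage_nonempty_of_forall_finset f hJ fun _ ↦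
    Convex.helly_theorem' (fun i _ ↦ (hJconv i).linear_preimage (f i)) fun t _ ht ↦ h t ht

theorem Submodule.exists_eq_span_singleton_of_finrank_eq_one {K W : Type*} [DivisionRing K]
    [AddCommGroup W] [Module K W] {S : Submodule K W} (hS : finrank K S = 1) : ∃ u, S = K ∙ u := by
  obtain ⟨u, huS, hu0⟩ := S.exists_mem_ne_zero_of_ne_bot fun h ↦ by
    rw [h, finrank_bot] at hS
    exact zero_ne_one hS
  exact ⟨u, eq_span_singleton_of_mem_of_finrank_eq_one hS huS hu0⟩

section Transversal

variable {V : Type*} [AddCommGroup V] [Module ℝ V]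

theorem LinearMap.image_segment_eq_uIcc (φ : V →ₗ[ℝ] ℝ) (a b : V) :
    φ '' segment ℝ a b = uIcc (φ a) (φ b) := by
  rw [← segment_eq_uIcc]
  exact image_segment ℝ φ.toAffineMap a b

theorem exists_dual_transversal [FiniteDimensional ℝ V] {ι : Type*} {u : V} {a b : ι → V}
    (hab : ∀ i, b i - a i ∈ ℝ ∙ u)
    (h : ∀ s : Finset ι, #s ≤ finrank ℝ V + 1 →
      ∃ φ : Dual ℝ V, φ u = 1 ∧ ∃ r, ∀ i ∈ s, r ∈ φ '' segment ℝ (a i) (b i)) :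
    ∃ φ : Dual ℝ V, φ u = 1 ∧ ∃ r, ∀ i, r ∈ φ '' segment ℝ (a i) (b i) := by
  obtain ⟨φ₀, hφ₀, -⟩ := h ∅ (by simp)
  set K := LinearMap.ker (Dual.eval ℝ V u)
  have hK : finrank ℝ (K × ℝ) = finrank ℝ V := by
    have hker := (Dual.eval ℝ V u).finrank_ker_add_one_of_ne_zero fun h ↦ by
      simpa [hφ₀] using LinearMap.congr_fun h φ₀
    rw [Subspace.dual_finrank_eq] at hker
    -- instance search does not find `Module.Free.of_divisionRing` for submodules of `Dual ℝ V`
    have : Free ℝ K := .of_basis (Basis.ofVectorSpace ℝ K)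
    rw [Module.finrank_prod, Module.finrank_self, hker]
  let ℓ (i : ι) : Dual ℝ (K × ℝ) :=
    LinearMap.snd ℝ K ℝ - Dual.eval ℝ V (a i) ∘ₗ K.subtype ∘ₗ LinearMap.fst ℝ K ℝ
  have hslab : ∀ (χ : K) (r : ℝ) (i : ι), r ∈ (φ₀ + (χ : Dual ℝ V)) '' segment ℝ (a i) (b i) ↔
      ℓ i (χ, r) ∈ uIcc (φ₀ (a i)) (φ₀ (b i)) := by
    intro χ r i
    obtain ⟨c, hc⟩ := Submodule.mem_span_singleton.1 (hab i)
    have hχ : (χ : Dual ℝ V) (b i) = (χ : Dual ℝ V) (a i) := by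
      have := congrArg (χ : Dual ℝ V) hc
      rw [map_smul, show (χ : Dual ℝ V) u = 0 from χ.2, smul_zero, map_sub] at this
      linarith
    rw [LinearMap.image_segment_eq_uIcc, LinearMap.add_apply, LinearMap.add_apply, hχ,
      ← preimage_sub_const_uIcc]
    exact Iff.rfl
  obtain ⟨p, hp⟩ := helly_theorem_slab (M := K × ℝ) ℓ (fun _ ↦ convex_uIcc _ _)
    (fun _ ↦ isCompact_uIcc) fun s hs ↦ by
      obtain ⟨φ, hφ, r, hr⟩ := h s (hK ▸ hs)
      have hχ : φ - φ₀ ∈ K := by simp [K, hφ, hφ₀]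
      refine ⟨(⟨φ - φ₀, hχ⟩, r), mem_iInter₂.2 fun i hi ↦ (hslab _ r i).1 ?_⟩
      simpa using hr i hi
  refine ⟨φ₀ + p.1, by simp [hφ₀, show (p.1 : Dual ℝ V) u = 0 from p.1.2], p.2, fun i ↦ ?_⟩
  exact (hslab p.1 p.2 i).2 (mem_iInter.1 hp i)

theorem AffineSubspace.exists_dual_subset_setOf {H : AffineSubspace ℝ V} {u : V}
    (hu : u ∉ H.direction) {p : V} (hp : p ∈ H) :
    ∃ φ : Dual ℝ V, φ u = 1 ∧ (H : Set V) ⊆ {x | φ x = φ p} := by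
  obtain ⟨f, hfu, hf⟩ := Submodule.exists_le_ker_of_notMem hu
  refine ⟨(f u)⁻¹ • f, by simp [hfu], fun x hx ↦ ?_⟩
  have : f (x - p) = 0 := hf (H.vsub_mem_direction hx hp)
  simp [sub_eq_zero.1 (map_sub f x p ▸ this)]

theorem AffineSubspace.injOn_dual_of_direction_eq_span {L : AffineSubspace ℝ V} {u : V}
    (hL : L.direction = ℝ ∙ u) {φ : Dual ℝ V} (hφ : φ u ≠ 0) : InjOn φ L := fun x hx y hy hxy ↦ by
  obtain ⟨c, hc⟩ := Submodule.mem_span_singleton.1 (hL ▸ L.vsub_mem_direction hx hy)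
  have : c * φ u = 0 := by rw [← smul_eq_mul, ← map_smul, hc, vsub_eq_sub, map_sub, hxy, sub_self]
  rw [← vsub_eq_zero_iff_eq, ← hc, (mul_eq_zero.1 this).resolve_right hφ, zero_smul]

end Transversal

theorem exists_isHyperplane_coe_eq {d : ℕ} {u : E d} {φ : Dual ℝ (E d)} (hφ : φ u = 1) (r : ℝ) :
    ∃ H : AffineSubspace ℝ (E d), IsHyperplane H ∧ u ∉ H.direction ∧
      (H : Set (E d)) = {x | φ x = r} := by
  have hφ0 : φ ≠ 0 := fun h ↦ by simp [h] at hφ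
  refine ⟨AffineSubspace.mk' (r • u) (LinearMap.ker φ),
    ⟨⟨r • u, AffineSubspace.self_mem_mk' _ _⟩, ?_⟩, ?_, ?_⟩
  · rw [AffineSubspace.direction_mk', φ.finrank_ker_add_one_of_ne_zero hφ0,
      finrank_euclideanSpace_fin]
  · simp [hφ]
  · ext x
    simp [AffineSubspace.mem_mk', hφ, sub_eq_zero]

theorem stmt_17 (d : ℕ) (g : AffineSubspace ℝ (E d))
    (hg : Module.finrank ℝ g.direction = 1)
    (ℐ : Set (Set (E d)))
    (hseg : ∀ I ∈ ℐ, ∃ a b : E d, I = segment ℝ a b)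
    (hpar : ∀ I ∈ ℐ, ∃ gI : AffineSubspace ℝ (E d),
      gI.direction = g.direction ∧ I ⊆ (gI : Set (E d)))
    (hHelly : ∀ 𝒦 ⊆ ℐ, 𝒦.Finite → 𝒦.ncard ≤ d + 1 →
      ∃ H : AffineSubspace ℝ (E d), IsHyperplane H ∧ ¬ g.direction ≤ H.direction ∧
        ∀ I ∈ 𝒦, (I ∩ (H : Set (E d))).Nonempty) :
    ∃ H : AffineSubspace ℝ (E d), IsHyperplane H ∧ ¬ g.direction ≤ H.direction ∧
      ∀ I ∈ ℐ, ∃ p : E d, I ∩ (H : Set (E d)) = {p} := by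
  obtain ⟨u, hu⟩ := g.direction.exists_eq_span_singleton_of_finrank_eq_one hg
  choose a b hab using fun I : ℐ ↦ hseg I I.2
  have hdir : ∀ I : ℐ, b I - a I ∈ ℝ ∙ u := fun I ↦ by
    obtain ⟨gI, hgI, hIgI⟩ := hpar I I.2
    rw [hab I] at hIgI
    rw [← hu, ← hgI, ← vsub_eq_sub]
    exact gI.vsub_mem_direction (hIgI (right_mem_segment ℝ _ _)) (hIgI (left_mem_segment ℝ _ _))
  obtain ⟨φ, hφ, r, hr⟩ := exists_dual_transversal hdir fun s hs ↦ by
    obtain ⟨H, ⟨⟨p, hp⟩, -⟩, hHg, hmeet⟩ := hHelly (Subtype.val '' (s : Set ℐ)) (by simp)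
      (s.finite_toSet.image _) ((ncard_image_le s.finite_toSet).trans
        (by simpa [finrank_euclideanSpace_fin] using hs))
    have huH : u ∉ H.direction := fun h ↦ hHg (hu ▸ (Submodule.span_singleton_le_iff_mem _ _).2 h)
    obtain ⟨φ, hφ, hHφ⟩ := H.exists_dual_subset_setOf huH hp
    refine ⟨φ, hφ, φ p, fun I hI ↦ ?_⟩
    obtain ⟨x, hxI, hxH⟩ := hmeet I ⟨I, hI, rfl⟩
    exact ⟨x, hab I ▸ hxI, hHφ hxH⟩
  obtain ⟨H, hH, huH, hHφ⟩ := exists_isHyperplane_coe_eq hφ r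
  refine ⟨H, hH, fun hle ↦ huH (hle (hu ▸ Submodule.mem_span_singleton_self u)), fun I hI ↦ ?_⟩
  obtain ⟨p, hpI, hpr⟩ := hr ⟨I, hI⟩
  obtain ⟨gI, hgI, hIgI⟩ := hpar I hI
  rw [← hab ⟨I, hI⟩] at hpI
  rw [hHφ]
  refine ⟨p, Subsingleton.eq_singleton_of_mem (fun x hx y hy ↦ ?_) ⟨hpI, hpr⟩⟩
  exact gI.injOn_dual_of_direction_eq_span (hgI.trans hu) (by simp [hφ]) (hIgI hx.1) (hIgI hy.1)
    (hx.2.trans hy.2.symm)
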